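/- With the notation of the context, suppose r4 ≥ 1 and n'_{r4} = 0. Then for all x > 0, Ω^{(α)}[n_1,…,n_{r1}; m_1,…,m_{r2}; m'_1,…,m'_{r3}; n'_1,…,n'_{r4}](x) = (−1)^{r1+r2+r4−1} · (∏_{i=1}^{r1}(n_i + 1) · ∏_{i=1}^{r2}(m_i + α)) · Ω^{(α−1)}[n_1+1,…,n_{r1}+1; m_1,…,m_{r2}; m'_1,…,m'_{r3}; n'_1−1,…,n'_{r4−1}−1](x), where on the right-hand side the last sequence has r4−1 entries (the entry n'_{r4} = 0 has been removed and every remaining entry decreased by 1). -/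

import Mathlib

open scoped BigOperators

/-- The Laguerre polynomial `L_n^{(α)}` as a function on `ℝ`; it is `0` for `n < 0`. -/
noncomputable def laguerre (α : ℝ) (n : ℤ) (x : ℝ) : ℝ :=
  if n < 0 then 0 else
    ∑ k ∈ Finset.range (n.toNat + 1),
      ((-1 : ℝ) ^ k / (Nat.factorial k : ℝ)) *
        ((∏ i ∈ Finset.Icc (k + 1) n.toNat, (α + (i : ℝ))) / (Nat.factorial (n.toNat - k) : ℝ)) *
        x ^ k

/-- The Wronskian `Wr[f_1, …, f_r](x) = det (f_i^{(j-1)}(x))`. -/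
noncomputable def Wr {r : ℕ} (f : Fin r → ℝ → ℝ) (x : ℝ) : ℝ :=
  Matrix.det (Matrix.of fun i j : Fin r => iteratedDeriv (j : ℕ) (f i) x)

/-- `Ω^{(α)}[n_1,…,n_{r1}; m_1,…,m_{r2}; m'_1,…,m'_{r3}; n'_1,…,n'_{r4}](x)
  = e^{−(r2+r4)x} x^{(α+r1+r2)(r3+r4)} Wr[f_1,…,f_r](x)` built out of the four types of
eigenfunctions of the Laguerre differential operator (0-indexed sequences `a, b, c, d`). -/
noncomputable def Omega4 (α : ℝ) (r1 r2 r3 r4 : ℕ) (a b c d : ℕ → ℕ) (x : ℝ) : ℝ :=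
  Real.exp (-((r2 : ℝ) + (r4 : ℝ)) * x) *
    x ^ ((α + (r1 : ℝ) + (r2 : ℝ)) * ((r3 : ℝ) + (r4 : ℝ))) *
    Wr (fun i : Fin (r1 + r2 + r3 + r4) => fun y =>
      if (i : ℕ) < r1 then laguerre α (a (i : ℕ)) y
      else if (i : ℕ) < r1 + r2 then Real.exp y * laguerre α (b ((i : ℕ) - r1)) (-y)
      else if (i : ℕ) < r1 + r2 + r3 then
        y ^ (-α) * laguerre (-α) (c ((i : ℕ) - r1 - r2)) y
      else Real.exp y * y ^ (-α) * laguerre (-α) (d ((i : ℕ) - r1 - r2 - r3)) (-y)) x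

/-!
Write `f_i = e^x x^{-α} q_i`. Since `n'_{r4} = 0`, the last function is exactly `e^x x^{-α}`, so
the last `q` is the constant `1`; pulling the common factor out of the Wronskian and expanding along
the row of that constant gives `Wr[f] = (-1)^{r-1} (e^x x^{-α})^r Wr[q_1', …, q_{r-1}']`.
The Laguerre identities
`(L_{n+1}^{(α)})' = -L_n^{(α+1)}`, `L_n^{(α)} - (L_n^{(α)})' = L_n^{(α+1)}`,
`α L_n^{(α)} + x (L_n^{(α)})' = (n+α) L_n^{(α-1)}` and
`α L_n^{(α)} + x (L_n^{(α)})' - x L_n^{(α)} = (n+1) L_{n+1}^{(α-1)}`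
show that each `q_i'` is `e^{-x} x^{α-1}` times the corresponding function for the parameter
`α - 1` (with `n_i ↦ n_i + 1` and `n'_i ↦ n'_i - 1`), up to the constant factor `n_i + 1`,
`m_i + α`, `-1` or `1` according to the block. Pulling out `e^{-x} x^{α-1}` and these constants once more
gives the identity.
-/

open Finset Polynomial Filter Topology Real

noncomputable def laguerreCoeff (α : ℝ) (n k : ℕ) : ℝ :=
  ((-1) ^ k / k.factorial) * ((∏ i ∈ Icc (k + 1) n, (α + i)) / (n - k).factorial)

noncomputable def laguerrePoly (α : ℝ) (n : ℕ) : ℝ[X] :=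
  ∑ k ∈ range (n + 1), C (laguerreCoeff α n k) * X ^ k

lemma laguerre_natCast (α : ℝ) (n : ℕ) (x : ℝ) : laguerre α n x = (laguerrePoly α n).eval x := by
  simp [laguerre, laguerrePoly, laguerreCoeff, eval_finsetSum]

lemma laguerrePoly_coeff (α : ℝ) (n k : ℕ) :
    (laguerrePoly α n).coeff k = if k ≤ n then laguerreCoeff α n k else 0 := by
  simp [laguerrePoly, finsetSum_coeff, coeff_C_mul, coeff_X_pow]

@[simp] lemma laguerrePoly_zero (α : ℝ) : laguerrePoly α 0 = 1 := by
  simp [laguerrePoly, laguerreCoeff]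

lemma prod_Icc_add_one_add (α : ℝ) (a b : ℕ) :
    ∏ i ∈ Icc (a + 1) (b + 1), (α + i) = ∏ i ∈ Icc a b, (α + 1 + i) := by
  rw [← map_add_right_Icc, prod_map]
  exact prod_congr rfl fun i _ => by push_cast [addRightEmbedding_apply]; ring

lemma prod_Icc_eq_mul_prod_Icc_succ (α : ℝ) {a b : ℕ} (h : a ≤ b) :
    ∏ i ∈ Icc a b, (α + i) = (α + a) * ∏ i ∈ Icc (a + 1) b, (α + i) := by
  rw [← insert_Icc_add_one_left_eq_Icc h, prod_insert (by simp)]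

lemma prod_Icc_add_one_add_sub_one (α : ℝ) (a b : ℕ) :
    ∏ i ∈ Icc (a + 1) (b + 1), (α - 1 + i) = ∏ i ∈ Icc a b, (α + i) := by
  simp [prod_Icc_add_one_add]

lemma derivative_laguerrePoly_succ (α : ℝ) (n : ℕ) :
    derivative (laguerrePoly α (n + 1)) = -laguerrePoly (α + 1) n := by
  ext k
  rw [coeff_derivative, coeff_neg, laguerrePoly_coeff, laguerrePoly_coeff]
  by_cases h : k ≤ n
  · rw [if_pos (by omega), if_pos h, laguerreCoeff, laguerreCoeff, ← prod_Icc_add_one_add,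
      show n + 1 - (k + 1) = n - k by omega, Nat.factorial_succ]
    push_cast
    field_simp
    ring
  · rw [if_neg (by omega), if_neg h, zero_mul, neg_zero]

lemma laguerrePoly_sub_derivative (α : ℝ) (n : ℕ) :
    laguerrePoly α n - derivative (laguerrePoly α n) = laguerrePoly (α + 1) n := by
  ext k
  rw [coeff_sub, coeff_derivative, laguerrePoly_coeff, laguerrePoly_coeff, laguerrePoly_coeff]
  rcases lt_trichotomy k n with h | rfl | h
  · obtain ⟨j, rfl⟩ : ∃ j, n = k + 1 + j := ⟨n - (k + 1), by omega⟩
    rw [if_pos h.le, if_pos (by omega), if_pos h.le, laguerreCoeff, laguerreCoeff, laguerreCoeff,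
      ← prod_Icc_add_one_add, prod_Icc_eq_mul_prod_Icc_succ α (by omega : k + 1 ≤ k + 1 + j),
      prod_Icc_succ_top (by omega : k + 1 + 1 ≤ k + 1 + j + 1),
      show k + 1 + j - k = j + 1 by omega, show k + 1 + j - (k + 1) = j by omega,
      Nat.factorial_succ k, Nat.factorial_succ j]
    push_cast
    field_simp
    ring
  · simp [laguerreCoeff]
  · rw [if_neg (by omega), if_neg (by omega), if_neg (by omega), zero_mul, sub_zero]

lemma coeff_X_mul_derivative {R : Type*} [CommSemiring R] (p : R[X]) (k : ℕ) :
    (X * derivative p).coeff k = k * p.coeff k := by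
  rcases k with _ | k
  · simp
  · rw [coeff_X_mul, coeff_derivative]; push_cast; ring

lemma add_mul_laguerreCoeff (α : ℝ) {n k : ℕ} (hk : k ≤ n) :
    (α + k) * laguerreCoeff α n k = (n + α) * laguerreCoeff (α - 1) n k := by
  rw [laguerreCoeff, laguerreCoeff]
  rcases hk.eq_or_lt with rfl | h
  · simp only [Icc_eq_empty_of_lt (Nat.lt_succ_self k), prod_empty, Nat.sub_self]
    ring
  · obtain ⟨j, rfl⟩ : ∃ j, n = k + j + 1 := ⟨n - (k + 1), by omega⟩
    rw [prod_Icc_add_one_add_sub_one α k (k + j),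
      prod_Icc_eq_mul_prod_Icc_succ α (a := k) (b := k + j) (by omega),
      prod_Icc_succ_top (by omega : k + 1 ≤ k + j + 1)]
    push_cast
    ring

lemma C_mul_laguerrePoly_add_X_mul_derivative (α : ℝ) (n : ℕ) :
    C α * laguerrePoly α n + X * derivative (laguerrePoly α n) =
      C (n + α) * laguerrePoly (α - 1) n := by
  ext k
  simp only [coeff_add, coeff_C_mul, coeff_X_mul_derivative, laguerrePoly_coeff]
  split_ifs with hk
  · rw [← add_mul_laguerreCoeff α hk]; ring
  · simp

lemma C_mul_laguerrePoly_add_X_mul_derivative_sub_X_mul (α : ℝ) (n : ℕ) :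
    C α * laguerrePoly α n + X * derivative (laguerrePoly α n) - X * laguerrePoly α n =
      C (n + 1 : ℝ) * laguerrePoly (α - 1) (n + 1) := by
  ext k
  rw [coeff_sub, coeff_add, coeff_C_mul, coeff_X_mul_derivative, coeff_C_mul]
  rcases k with _ | k
  · rw [mul_coeff_zero, coeff_X_zero, laguerrePoly_coeff, laguerrePoly_coeff,
      if_pos (Nat.zero_le _), if_pos (Nat.zero_le _), laguerreCoeff, laguerreCoeff,
      prod_Icc_add_one_add_sub_one α 0 n, prod_Icc_eq_mul_prod_Icc_succ α (Nat.zero_le n),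
      Nat.sub_zero, Nat.sub_zero, Nat.factorial_succ]
    push_cast
    field_simp
    ring
  · rw [coeff_X_mul, laguerrePoly_coeff, laguerrePoly_coeff, laguerrePoly_coeff]
    rcases lt_trichotomy k n with h | rfl | h
    · obtain ⟨j, rfl⟩ : ∃ j, n = k + j + 1 := ⟨n - (k + 1), by omega⟩
      rw [if_pos (by omega), if_pos (by omega), if_pos (by omega), laguerreCoeff, laguerreCoeff,
        laguerreCoeff, show k + j + 1 - k = j + 1 by omega, show k + j + 1 - (k + 1) = j by omega,
        show k + j + 1 + 1 - (k + 1) = j + 1 by omega, prod_Icc_add_one_add_sub_one α (k + 1),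
        prod_Icc_eq_mul_prod_Icc_succ α (a := k + 1) (by omega), Nat.factorial_succ k,
        Nat.factorial_succ j]
      push_cast
      field_simp
      ring
    · rw [if_neg (by omega), if_pos le_rfl, if_pos (by omega), laguerreCoeff, laguerreCoeff,
        Nat.sub_self, Nat.sub_self, Icc_eq_empty (by omega), Icc_eq_empty (by omega),
        Nat.factorial_succ]
      push_cast
      field_simp
      ring
    · rw [if_neg (by omega), if_neg (by omega), if_neg (by omega)]; ring

lemma Wr_congr {r : ℕ} {f g : Fin r → ℝ → ℝ} {x : ℝ} (h : ∀ i, f i =ᶠ[𝓝 x] g i) :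
    Wr f x = Wr g x := by
  simp only [Wr, fun i j => (h i).iteratedDeriv_eq (j : ℕ)]

lemma Wr_const_mul {r : ℕ} (κ : Fin r → ℝ) (f : Fin r → ℝ → ℝ) (x : ℝ) :
    Wr (fun i y => κ i * f i y) x = (∏ i, κ i) * Wr f x := by
  simp only [Wr, iteratedDeriv_const_mul_field]
  exact Matrix.det_mul_column κ _

/-- Leibniz' rule makes the matrix of the `f i * g` the matrix of the `f i` times an upper
triangular matrix with diagonal `g x`. -/
lemma Wr_mul_right {r : ℕ} {f : Fin r → ℝ → ℝ} {g : ℝ → ℝ} {x : ℝ}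
    (hf : ∀ i, ContDiffAt ℝ r (f i) x) (hg : ContDiffAt ℝ r g x) :
    Wr (fun i y => f i y * g y) x = g x ^ r * Wr f x := by
  let T : Matrix (Fin r) (Fin r) ℝ := Matrix.of fun k j =>
    if (k : ℕ) ≤ j then ((j : ℕ).choose k : ℝ) * iteratedDeriv (j - k) g x else 0
  have hT : (Matrix.of fun i j : Fin r => iteratedDeriv j (fun y => f i y * g y) x) =
      (Matrix.of fun i k : Fin r => iteratedDeriv k (f i) x) * T := by
    ext i j
    have hj : ((j : ℕ) : WithTop ℕ∞) ≤ r := by exact_mod_cast j.isLt.le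
    simp only [Matrix.of_apply, Matrix.mul_apply, T]
    rw [iteratedDeriv_fun_mul ((hf i).of_le hj) (hg.of_le hj),
      Fin.sum_univ_eq_sum_range (fun k => iteratedDeriv k (f i) x *
        if (k : ℕ) ≤ j then ((j : ℕ).choose k : ℝ) * iteratedDeriv (j - k) g x else 0),
      ← sum_subset (range_subset_range.2 j.isLt) fun k _ hk => by
        rw [if_neg fun hkj => hk (mem_range.2 (Nat.lt_succ_of_le hkj)), mul_zero]]
    refine sum_congr rfl fun k hk => ?_
    rw [if_pos (Nat.lt_succ_iff.1 (mem_range.1 hk))]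
    ring
  have hdet : T.det = g x ^ r := by
    have hupper : T.IsUpperTriangular := fun k j hjk => if_neg (not_le.2 hjk)
    rw [Matrix.det_of_isUpperTriangular hupper]
    simp [T]
  rw [Wr, hT, Matrix.det_mul, hdet, Wr, mul_comm]

lemma Wr_eq_neg_one_pow_mul_Wr_deriv {N : ℕ} {f : Fin (N + 1) → ℝ → ℝ} {f' : Fin N → ℝ → ℝ}
    {x c : ℝ} (hlast : f (Fin.last N) =ᶠ[𝓝 x] fun _ => c)
    (hf : ∀ i, ∀ᶠ y in 𝓝 x, HasDerivAt (f i.castSucc) (f' i y) y) :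
    Wr f x = (-1) ^ N * c * Wr f' x := by
  have hlast_deriv (j : ℕ) : iteratedDeriv j (f (Fin.last N)) x = if j = 0 then c else 0 := by
    rw [hlast.iteratedDeriv_eq, iteratedDeriv_const]
  rw [Wr, Matrix.det_succ_row _ (Fin.last N), sum_eq_single (0 : Fin (N + 1))]
  · have hderiv (i : Fin N) : deriv (f i.castSucc) =ᶠ[𝓝 x] f' i :=
      (hf i).mono fun y hy => hy.deriv
    have hminor : (Matrix.of fun i j : Fin (N + 1) => iteratedDeriv j (f i) x).submatrix
        (Fin.last N).succAbove (0 : Fin (N + 1)).succAbove =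
          Matrix.of fun i j : Fin N => iteratedDeriv j (f' i) x := by
      ext i j
      simp only [Matrix.submatrix_apply, Fin.succAbove_last, Fin.zero_succAbove, Matrix.of_apply,
        Fin.val_succ]
      rw [iteratedDeriv_succ', (hderiv i).iteratedDeriv_eq]
    rw [hminor, Matrix.of_apply, hlast_deriv, Wr]
    simp only [Fin.val_last, Fin.val_zero, add_zero, if_true]
  · intro j _ hj
    simp [hlast_deriv, Fin.val_ne_zero_iff.2 hj]
  · simp

lemma contDiff_laguerre (α : ℝ) (n : ℕ) {k : WithTop ℕ∞} :
    ContDiff ℝ k fun y => laguerre α n y := by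
  simpa [laguerre_natCast] using (laguerrePoly α n).contDiff_aeval (𝕜 := ℝ) k

lemma rpow_eq_rpow_sub_one_mul {x : ℝ} (hx : x ≠ 0) (α : ℝ) : x ^ α = x ^ (α - 1) * x := by
  rw [← rpow_add_one hx, sub_add_cancel]

lemma hasDerivAt_exp_neg_mul_rpow_mul_laguerrePoly (α : ℝ) (n : ℕ) {x : ℝ} (hx : x ≠ 0) :
    HasDerivAt (fun y => exp (-y) * y ^ α * (laguerrePoly α n).eval y)
      ((n + 1) * (exp (-x) * x ^ (α - 1) * (laguerrePoly (α - 1) (n + 1)).eval x)) x := by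
  have h := congrArg (eval x) (C_mul_laguerrePoly_add_X_mul_derivative_sub_X_mul α n)
  simp only [eval_sub, eval_add, eval_mul, eval_C, eval_X] at h
  refine ((((hasDerivAt_neg x).exp).mul (hasDerivAt_rpow_const (Or.inl hx))).mul
    ((laguerrePoly α n).hasDerivAt x)).congr_deriv ?_
  simp only [Pi.mul_apply, rpow_eq_rpow_sub_one_mul hx α]
  linear_combination exp (-x) * x ^ (α - 1) * h

lemma hasDerivAt_rpow_mul_laguerrePoly_neg (α : ℝ) (n : ℕ) {x : ℝ} (hx : x ≠ 0) :
    HasDerivAt (fun y => y ^ α * (laguerrePoly α n).eval (-y))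
      ((n + α) * (x ^ (α - 1) * (laguerrePoly (α - 1) n).eval (-x))) x := by
  have h := congrArg (eval (-x)) (C_mul_laguerrePoly_add_X_mul_derivative α n)
  simp only [eval_add, eval_mul, eval_C, eval_X] at h
  refine ((hasDerivAt_rpow_const (Or.inl hx)).mul
    (((laguerrePoly α n).hasDerivAt (-x)).comp x (hasDerivAt_neg x))).congr_deriv ?_
  rw [Function.comp_apply, rpow_eq_rpow_sub_one_mul hx α]
  linear_combination x ^ (α - 1) * h

lemma hasDerivAt_exp_neg_mul_laguerrePoly (α : ℝ) (n : ℕ) (x : ℝ) :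
    HasDerivAt (fun y => exp (-y) * (laguerrePoly α n).eval y)
      (-(exp (-x) * (laguerrePoly (α + 1) n).eval x)) x := by
  have h := congrArg (eval x) (laguerrePoly_sub_derivative α n)
  rw [eval_sub] at h
  refine (((hasDerivAt_neg x).exp).mul ((laguerrePoly α n).hasDerivAt x)).congr_deriv ?_
  linear_combination -exp (-x) * h

lemma hasDerivAt_laguerrePoly_succ_neg (α : ℝ) (n : ℕ) (x : ℝ) :
    HasDerivAt (fun y => (laguerrePoly α (n + 1)).eval (-y))
      ((laguerrePoly (α + 1) n).eval (-x)) x := by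
  refine (((laguerrePoly α (n + 1)).hasDerivAt (-x)).comp x (hasDerivAt_neg x)).congr_deriv ?_
  simp [derivative_laguerrePoly_succ]

noncomputable def omegaFun (α : ℝ) (r1 r2 r3 : ℕ) (a b c d : ℕ → ℕ) (i : ℕ) (y : ℝ) : ℝ :=
  if i < r1 then laguerre α (a i) y
  else if i < r1 + r2 then exp y * laguerre α (b (i - r1)) (-y)
  else if i < r1 + r2 + r3 then y ^ (-α) * laguerre (-α) (c (i - r1 - r2)) y
  else exp y * y ^ (-α) * laguerre (-α) (d (i - r1 - r2 - r3)) (-y)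

lemma Omega4_eq (α : ℝ) (r1 r2 r3 r4 : ℕ) (a b c d : ℕ → ℕ) (x : ℝ) :
    Omega4 α r1 r2 r3 r4 a b c d x = exp (-((r2 : ℝ) + r4) * x) *
      x ^ ((α + r1 + r2) * ((r3 : ℝ) + r4)) *
      Wr (fun i : Fin (r1 + r2 + r3 + r4) => omegaFun α r1 r2 r3 a b c d i) x := rfl

noncomputable def omegaWeight (α : ℝ) (r1 r2 r3 : ℕ) (a b : ℕ → ℕ) (i : ℕ) : ℝ :=
  if i < r1 then a i + 1 else if i < r1 + r2 then b (i - r1) + α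
  else if i < r1 + r2 + r3 then -1 else 1

section omegaFun

variable (α : ℝ) (r1 r2 r3 : ℕ) (a b c d : ℕ → ℕ)

lemma contDiffAt_omegaFun (i : ℕ) {x : ℝ} (hx : 0 < x) {k : WithTop ℕ∞} :
    ContDiffAt ℝ k (omegaFun α r1 r2 r3 a b c d i) x := by
  have hpow (p : ℝ) : ContDiffAt ℝ k (fun y : ℝ => y ^ p) x := contDiffAt_rpow_const_of_ne hx.ne'
  have hlag (β : ℝ) (n : ℕ) : ContDiffAt ℝ k (fun y => laguerre β n y) x :=
    (contDiff_laguerre β n).contDiffAt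
  have hlag_neg (β : ℝ) (n : ℕ) : ContDiffAt ℝ k (fun y => laguerre β n (-y)) x :=
    ((contDiff_laguerre β n).comp contDiff_neg).contDiffAt
  unfold omegaFun
  split_ifs
  · exact hlag _ _
  · exact contDiff_exp.contDiffAt.mul (hlag_neg _ _)
  · exact (hpow _).mul (hlag _ _)
  · exact (contDiff_exp.contDiffAt.mul (hpow _)).mul (hlag_neg _ _)

lemma hasDerivAt_exp_neg_mul_rpow_mul_omegaFun {i : ℕ}
    (hd : r1 + r2 + r3 ≤ i → 0 < d (i - r1 - r2 - r3)) {x : ℝ} (hx : 0 < x) :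
    HasDerivAt (fun y => exp (-y) * y ^ α * omegaFun α r1 r2 r3 a b c d i y)
      (omegaWeight α r1 r2 r3 a b i * (omegaFun (α - 1) r1 r2 r3 (fun j => a j + 1) b c
        (fun j => d j - 1) i x * (exp (-x) * x ^ (α - 1)))) x := by
  have hpos : ∀ᶠ y in 𝓝 x, 0 < y := lt_mem_nhds hx
  unfold omegaFun omegaWeight
  simp only [laguerre_natCast]
  split_ifs with h1 h2 h3
  · convert hasDerivAt_exp_neg_mul_rpow_mul_laguerrePoly α (a i) hx.ne' using 1
    ring
  · refine ((hasDerivAt_rpow_mul_laguerrePoly_neg α (b (i - r1)) hx.ne').congr_of_eventuallyEq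
      (Eventually.of_forall fun y => ?_)).congr_deriv ?_
    · simp only [exp_neg]
      field_simp
    · simp only [exp_neg]
      field_simp
  · have h := hasDerivAt_exp_neg_mul_laguerrePoly (-α) (c (i - r1 - r2)) x
    rw [show -α + 1 = -(α - 1) by ring] at h
    refine (h.congr_of_eventuallyEq (hpos.mono fun y hy => ?_)).congr_deriv ?_
    · simp only [rpow_neg hy.le]
      field_simp
    · simp only [rpow_neg hx.le]
      field_simp
  · obtain ⟨n, hn⟩ : ∃ n, d (i - r1 - r2 - r3) = n + 1 := Nat.exists_eq_add_one.2 (hd (by omega))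
    have h := hasDerivAt_laguerrePoly_succ_neg (-α) n x
    rw [show -α + 1 = -(α - 1) by ring] at h
    rw [hn, Nat.add_sub_cancel]
    refine (h.congr_of_eventuallyEq (hpos.mono fun y hy => ?_)).congr_deriv ?_
    · simp only [rpow_neg hy.le, exp_neg]
      field_simp
    · simp only [rpow_neg hx.le, exp_neg]
      field_simp

lemma exp_neg_mul_rpow_mul_omegaFun_last {m : ℕ} (hdm : d m = 0) {y : ℝ} (hy : 0 < y) :
    exp (-y) * y ^ α * omegaFun α r1 r2 r3 a b c d (r1 + r2 + r3 + m) y = 1 := by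
  simp only [omegaFun, show ¬ r1 + r2 + r3 + m < r1 + r2 + r3 by omega,
    show ¬ r1 + r2 + r3 + m < r1 + r2 by omega, show ¬ r1 + r2 + r3 + m < r1 by omega,
    if_false, show r1 + r2 + r3 + m - r1 - r2 - r3 = m by omega, hdm, laguerre_natCast,
    laguerrePoly_zero, eval_one, rpow_neg hy.le, exp_neg]
  field_simp

lemma Wr_omegaFun_eq {m : ℕ} (hd : ∀ j < m, 0 < d j) (hdm : d m = 0) {x : ℝ} (hx : 0 < x) :
    Wr (fun i : Fin (r1 + r2 + r3 + (m + 1)) => omegaFun α r1 r2 r3 a b c d i) x =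
      (exp x * x ^ (-α)) ^ (r1 + r2 + r3 + m + 1) * ((-1) ^ (r1 + r2 + r3 + m) *
        ((∏ i : Fin (r1 + r2 + r3 + m), omegaWeight α r1 r2 r3 a b i) *
          ((exp (-x) * x ^ (α - 1)) ^ (r1 + r2 + r3 + m) *
            Wr (fun i : Fin (r1 + r2 + r3 + m) =>
              omegaFun (α - 1) r1 r2 r3 (fun j => a j + 1) b c (fun j => d j - 1) i) x))) := by
  have hpos : ∀ᶠ y in 𝓝 x, 0 < y := lt_mem_nhds hx
  set q : Fin (r1 + r2 + r3 + (m + 1)) → ℝ → ℝ :=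
    fun i y => exp (-y) * y ^ α * omegaFun α r1 r2 r3 a b c d i y
  have hsplit (i : Fin (r1 + r2 + r3 + (m + 1))) :
      omegaFun α r1 r2 r3 a b c d i =ᶠ[𝓝 x] fun y => q i y * (exp y * y ^ (-α)) :=
    hpos.mono fun y hy => by simp only [q, rpow_neg hy.le, exp_neg]; field_simp
  have hlast : q (Fin.last (r1 + r2 + r3 + m)) =ᶠ[𝓝 x] fun _ => 1 :=
    hpos.mono fun y hy => exp_neg_mul_rpow_mul_omegaFun_last α r1 r2 r3 a b c d hdm hy
  have hderiv (i : Fin (r1 + r2 + r3 + m)) : ∀ᶠ y in 𝓝 x, HasDerivAt (q i.castSucc)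
      (omegaWeight α r1 r2 r3 a b i * (omegaFun (α - 1) r1 r2 r3 (fun j => a j + 1) b c
        (fun j => d j - 1) i y * (exp (-y) * y ^ (α - 1)))) y :=
    hpos.mono fun y hy => hasDerivAt_exp_neg_mul_rpow_mul_omegaFun α r1 r2 r3 a b c d
      (fun _ => hd _ (by have := i.isLt; have := Fin.val_castSucc i; omega)) hy
  have hexp {k : WithTop ℕ∞} (β : ℝ) : ContDiffAt ℝ k (fun y => exp y * y ^ β) x := by
    fun_prop (disch := exact hx.ne')
  have hexp_neg {k : WithTop ℕ∞} (β : ℝ) : ContDiffAt ℝ k (fun y => exp (-y) * y ^ β) x := by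
    fun_prop (disch := exact hx.ne')
  rw [Wr_congr hsplit,
    Wr_mul_right (fun i => (hexp_neg α).mul (contDiffAt_omegaFun _ _ _ _ _ _ _ _ _ hx)) (hexp _),
    Wr_eq_neg_one_pow_mul_Wr_deriv (N := r1 + r2 + r3 + m) hlast hderiv, Wr_const_mul,
    Wr_mul_right (fun i => contDiffAt_omegaFun _ _ _ _ _ _ _ _ _ hx) (hexp_neg _)]
  ring

lemma prod_omegaWeight (m : ℕ) :
    ∏ i : Fin (r1 + r2 + r3 + m), omegaWeight α r1 r2 r3 a b i =
      (-1) ^ r3 * ((∏ i ∈ range r1, ((a i : ℝ) + 1)) * ∏ i ∈ range r2, ((b i : ℝ) + α)) := by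
  rw [Fin.prod_univ_eq_prod_range (omegaWeight α r1 r2 r3 a b), prod_range_add, prod_range_add,
    prod_range_add]
  have h1 : ∏ i ∈ range r1, omegaWeight α r1 r2 r3 a b i = ∏ i ∈ range r1, ((a i : ℝ) + 1) :=
    prod_congr rfl fun i hi => if_pos (mem_range.1 hi)
  have h2 : ∏ i ∈ range r2, omegaWeight α r1 r2 r3 a b (r1 + i) = ∏ i ∈ range r2, ((b i : ℝ) + α) :=
    prod_congr rfl fun i hi => by have := mem_range.1 hi; simp [omegaWeight, this]
  have h3 : ∏ i ∈ range r3, omegaWeight α r1 r2 r3 a b (r1 + r2 + i) = ∏ _ ∈ range r3, (-1 : ℝ) :=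
    prod_congr rfl fun i hi => by
      have := mem_range.1 hi
      rw [omegaWeight, if_neg (by omega), if_neg (by omega), if_pos (by omega)]
  have h4 : ∏ i ∈ range m, omegaWeight α r1 r2 r3 a b (r1 + r2 + r3 + i) = ∏ _ ∈ range m, (1 : ℝ) :=
    prod_congr rfl fun i _ => by
      rw [omegaWeight, if_neg (by omega), if_neg (by omega), if_neg (by omega)]
  rw [h1, h2, h3, h4, prod_const, prod_const_one, card_range]
  ring

end omegaFun

lemma exp_mul_rpow_mul_pow_mul_pow {x : ℝ} (hx : 0 < x) (s t α : ℝ) (N : ℕ) :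
    exp (s * x) * x ^ t * ((exp x * x ^ (-α)) ^ (N + 1) * (exp (-x) * x ^ (α - 1)) ^ N) =
      exp ((s + 1) * x) * x ^ (t - α - N) := by
  have hexp : exp ((s + 1) * x) = exp (s * x) * exp x ^ (N + 1) * exp (-x) ^ N := by
    rw [← exp_nat_mul, ← exp_nat_mul, ← exp_add, ← exp_add]
    push_cast
    ring_nf
  have hrpow : x ^ (t - α - N) = x ^ t * (x ^ (-α)) ^ (N + 1) * (x ^ (α - 1)) ^ N := by
    rw [← rpow_natCast, ← rpow_natCast, ← rpow_mul hx.le, ← rpow_mul hx.le, ← rpow_add hx,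
      ← rpow_add hx]
    push_cast
    ring_nf
  rw [hexp, hrpow]
  ring

theorem omega4_reduction_fourth_general (α : ℝ) (r1 r2 r3 r4 : ℕ) (a b c d : ℕ → ℕ)
    (hd : ∀ i j, i < j → j < r4 → d j < d i)
    (hr4 : 0 < r4) (hd0 : d (r4 - 1) = 0) :
    ∀ x : ℝ, 0 < x →
      Omega4 α r1 r2 r3 r4 a b c d x =
        (-1 : ℝ) ^ (r1 + r2 + r4 - 1) *
          ((∏ i ∈ Finset.range r1, ((a i : ℝ) + 1)) *
            (∏ i ∈ Finset.range r2, ((b i : ℝ) + α))) *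
          Omega4 (α - 1) r1 r2 r3 (r4 - 1) (fun i => a i + 1) b c (fun i => d i - 1) x := by
  obtain ⟨m, rfl⟩ : ∃ m, r4 = m + 1 := ⟨r4 - 1, by omega⟩
  rw [Nat.add_sub_cancel] at hd0 ⊢
  intro x hx
  have hd_pos : ∀ j < m, 0 < d j := fun j hj => hd0 ▸ hd j m hj (by omega)
  have hsign : (-1 : ℝ) ^ (r1 + r2 + r3 + m) * (-1) ^ r3 = (-1) ^ (r1 + r2 + (m + 1) - 1) := by
    rw [← pow_add, show r1 + r2 + r3 + m + r3 = r1 + r2 + (m + 1) - 1 + 2 * r3 by omega,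
      pow_add, pow_mul, neg_one_sq, one_pow, mul_one]
  have hprefactor := exp_mul_rpow_mul_pow_mul_pow hx (-((r2 : ℝ) + (m + 1 : ℕ)))
    ((α + r1 + r2) * ((r3 : ℝ) + (m + 1 : ℕ))) α (r1 + r2 + r3 + m)
  rw [show -((r2 : ℝ) + (m + 1 : ℕ)) + 1 = -((r2 : ℝ) + m) by push_cast; ring,
    show (α + r1 + r2) * ((r3 : ℝ) + (m + 1 : ℕ)) - α - (r1 + r2 + r3 + m : ℕ) =
      (α - 1 + r1 + r2) * ((r3 : ℝ) + m) by push_cast; ring] at hprefactor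
  rw [Omega4_eq, Omega4_eq, Wr_omegaFun_eq α r1 r2 r3 a b c d hd_pos hd0 hx, prod_omegaWeight,
    ← hsign, ← hprefactor]
  ring

/-- **Reduction when `n'_{r4} = 0`.** If the fourth sequence ends in `0`, then for `x > 0`,
`Ω^{(α)}[n; m; m'; n'](x) = (−1)^{r1+r2+r4−1} (∏ᵢ(n_i + 1) ∏ᵢ(m_i + α)) ·
Ω^{(α−1)}[n_1+1,…,n_{r1}+1; m; m'; n'_1−1,…,n'_{r4−1}−1](x)`. -/
theorem omega4_reduction_fourth (α : ℝ) (r1 r2 r3 r4 : ℕ) (a b c d : ℕ → ℕ)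
    (ha : ∀ i j, i < j → j < r1 → a j < a i)
    (hb : ∀ i j, i < j → j < r2 → b j < b i)
    (hc : ∀ i j, i < j → j < r3 → c j < c i)
    (hd : ∀ i j, i < j → j < r4 → d j < d i)
    (hr4 : 0 < r4) (hd0 : d (r4 - 1) = 0) :
    ∀ x : ℝ, 0 < x →
      Omega4 α r1 r2 r3 r4 a b c d x =
        (-1 : ℝ) ^ (r1 + r2 + r4 - 1) *
          ((∏ i ∈ Finset.range r1, ((a i : ℝ) + 1)) *
            (∏ i ∈ Finset.range r2, ((b i : ℝ) + α))) *
          Omega4 (α - 1) r1 r2 r3 (r4 - 1) (fun i => a i + 1) b c (fun i => d i - 1) x :=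
  omega4_reduction_fourth_general α r1 r2 r3 r4 a b c d hd hr4 hd0
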